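/- There exists a natural number R with R ≤ (π/4)·√N such that ‖G^R|s⟩ − |m⟩‖ ≤ 2/√N. In particular |⟨m | G^R |s⟩|² ≥ 1 − 2/N, so after at most (π/4)√N Grover iterations, measuring yields the marked element with probability tending to 1 as N → ∞. -/

import Mathlib

/-!
The Grover iteration `G = -(1 - 2|s⟩⟨s|)(1 - 2|m⟩⟨m|)` is minus a product of two reflections, so on
the plane spanned by `|m⟩` and `|s⟩` it is the rotation by `2θ`, where `sin θ = ⟨m|s⟩ = 1/√N`.
Writing `|s⟩ = sin θ |m⟩ + cos θ |w⟩` with `w ⊥ m`, we get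
`G^R|s⟩ = sin ((2R+1)θ) |m⟩ + cos ((2R+1)θ) |w⟩`. For `R = ⌊π/(4θ)⌋` the angle `(2R+1)θ` lies
within `θ` of `π/2`, which gives both estimates, and `θ ≥ sin θ = 1/√N` gives `R ≤ (π/4)√N`.
-/

open scoped Real InnerProductSpace

/-- The rank-one projector `|ψ⟩⟨ψ|`, mapping `v` to `⟪ψ, v⟫ • ψ`. -/
noncomputable def proj {H : Type*} [NormedAddCommGroup H] [InnerProductSpace ℂ H]
    (ψ : H) : H →L[ℂ] H := (innerSL ℂ ψ).smulRight ψ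

/-- The uniform superposition `|s⟩ = (1/√N) ∑_x |x⟩`. -/
noncomputable def uniformState (N : ℕ) : EuclideanSpace ℂ (Fin N) :=
  ((1 / Real.sqrt N : ℝ) : ℂ) • ∑ x : Fin N, EuclideanSpace.single x (1 : ℂ)

open Real

lemma proj_apply {H : Type*} [NormedAddCommGroup H] [InnerProductSpace ℂ H] (ψ v : H) :
    proj ψ v = ⟪ψ, v⟫_ℂ • ψ := rfl

lemma exists_nat_abs_odd_mul_sub_pi_div_two_le {θ : ℝ} (hθ : 0 < θ) :
    ∃ R : ℕ, (R : ℝ) ≤ π / (4 * θ) ∧ |(2 * R + 1) * θ - π / 2| ≤ θ := by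
  refine ⟨⌊π / (4 * θ)⌋₊, Nat.floor_le (by positivity), abs_le.2 ⟨?_, ?_⟩⟩
  · have := Nat.lt_floor_add_one (π / (4 * θ))
    rw [div_lt_iff₀ (by positivity)] at this
    linarith
  · have := Nat.floor_le (div_nonneg pi_pos.le (by positivity : (0 : ℝ) ≤ 4 * θ))
    rw [le_div_iff₀ (by positivity)] at this
    linarith

lemma cos_le_sin_of_abs_sub_pi_div_two_le {θ φ : ℝ} (hφ : |φ - π / 2| ≤ θ) (hθ : θ ≤ π) :
    cos θ ≤ sin φ := by
  rw [← cos_sub_pi_div_two, ← cos_abs (φ - π / 2)]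
  exact cos_le_cos_of_nonneg_of_le_pi (abs_nonneg _) hθ hφ

section

variable {H : Type*} [NormedAddCommGroup H] [InnerProductSpace ℂ H]

noncomputable def groverOp (s e : H) : H →L[ℂ] H :=
  -((1 - (2 : ℂ) • proj s) * (1 - (2 : ℂ) • proj e))

noncomputable def circlePoint (e w : H) (φ : ℝ) : H := (sin φ : ℂ) • e + (cos φ : ℂ) • w

variable {e w : H}

lemma circlePoint_pi_div_two : circlePoint e w (π / 2) = e := by
  simp [circlePoint]

lemma circlePoint_add_pi (φ : ℝ) : circlePoint e w (φ + π) = -circlePoint e w φ := by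
  simp only [circlePoint, sin_add_pi, cos_add_pi, Complex.ofReal_neg, neg_smul, neg_add]

lemma exists_circlePoint_eq {s : H} {θ : ℝ} (he : ‖e‖ = 1) (hs : ‖s‖ = 1)
    (hes : ⟪e, s⟫_ℂ = sin θ) (hθ : cos θ ≠ 0) :
    ∃ w : H, ‖w‖ = 1 ∧ ⟪e, w⟫_ℂ = 0 ∧ s = circlePoint e w θ := by
  have hse : ⟪s, e⟫_ℂ = sin θ := by rw [← inner_conj_symm, hes, Complex.conj_ofReal]
  have hθC : (cos θ : ℂ) ≠ 0 := Complex.ofReal_ne_zero.2 hθ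
  have hnorm_sq : ‖s - (sin θ : ℂ) • e‖ ^ 2 = cos θ ^ 2 := by
    rw [norm_sub_sq (𝕜 := ℂ), inner_smul_right, hse, norm_smul, hs, he, Complex.norm_real,
      Real.norm_eq_abs, ← Complex.ofReal_mul, RCLike.re_to_complex, Complex.ofReal_re]
    nlinarith [sin_sq_add_cos_sq θ, sq_abs (sin θ)]
  have hnorm : ‖s - (sin θ : ℂ) • e‖ = |cos θ| := by
    rw [← sqrt_sq (norm_nonneg _), hnorm_sq, sqrt_sq_eq_abs]
  refine ⟨(cos θ : ℂ)⁻¹ • (s - (sin θ : ℂ) • e), ?_, ?_, ?_⟩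
  · rw [norm_smul, norm_inv, Complex.norm_real, Real.norm_eq_abs, hnorm]
    exact inv_mul_cancel₀ (abs_ne_zero.2 hθ)
  · rw [inner_smul_right, inner_sub_right, inner_smul_right, hes, inner_self_eq_norm_sq_to_K, he]
    push_cast
    ring
  · rw [circlePoint, smul_smul, mul_inv_cancel₀ hθC, one_smul]
    abel

variable (he : ‖e‖ = 1) (hw : ‖w‖ = 1) (hew : ⟪e, w⟫_ℂ = 0)
include he hw hew

lemma inner_circlePoint (α β : ℝ) :
    ⟪circlePoint e w α, circlePoint e w β⟫_ℂ = (cos (β - α) : ℂ) := by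
  have hwe : ⟪w, e⟫_ℂ = 0 := by rw [← inner_conj_symm, hew, map_zero]
  simp only [circlePoint, inner_add_left, inner_add_right, inner_smul_left, inner_smul_right,
    inner_self_eq_norm_sq_to_K, he, hw, hew, hwe, Complex.conj_ofReal, cos_sub]
  push_cast
  ring

lemma norm_circlePoint (φ : ℝ) : ‖circlePoint e w φ‖ = 1 := by
  have h : ‖circlePoint e w φ‖ ^ 2 = 1 := by
    rw [@norm_sq_eq_re_inner ℂ, inner_circlePoint he hw hew]
    simp
  exact (pow_eq_one_iff_of_nonneg (norm_nonneg _) two_ne_zero).1 h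

lemma norm_circlePoint_sub_sq (α β : ℝ) :
    ‖circlePoint e w α - circlePoint e w β‖ ^ 2 = 2 - 2 * cos (β - α) := by
  rw [norm_sub_sq (𝕜 := ℂ), inner_circlePoint he hw hew, norm_circlePoint he hw hew,
    norm_circlePoint he hw hew, RCLike.re_to_complex, Complex.ofReal_re]
  ring

lemma reflection_circlePoint (α β : ℝ) :
    (1 - (2 : ℂ) • proj (circlePoint e w α)) (circlePoint e w β) =
      -circlePoint e w (2 * α - β) := by
  have hsin : sin (2 * α - β) = 2 * cos (β - α) * sin α - sin β := by
    rw [sin_sub, sin_two_mul, cos_two_mul, cos_sub]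
    linear_combination (-2 * sin β) * sin_sq_add_cos_sq α
  have hcos : cos (2 * α - β) = 2 * cos (β - α) * cos α - cos β := by
    rw [cos_sub, sin_two_mul, cos_two_mul, cos_sub]
    ring
  rw [sub_apply, smul_apply, proj_apply, inner_circlePoint he hw hew]
  simp only [one_apply_eq_self, circlePoint, hsin, hcos]
  push_cast
  module

-- With `e` the point at angle `π/2`, the two reflections send `φ ↦ π - φ ↦ 2θ - π + φ`,
-- and the overall sign adds the missing `π`.
lemma groverOp_circlePoint (θ φ : ℝ) :
    groverOp (circlePoint e w θ) e (circlePoint e w φ) = circlePoint e w (φ + 2 * θ) := by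
  have hreflect_e := reflection_circlePoint he hw hew (π / 2) φ
  rw [circlePoint_pi_div_two] at hreflect_e
  rw [groverOp, neg_apply, mul_apply_eq_comp, hreflect_e, map_neg,
    reflection_circlePoint he hw hew, neg_neg, ← circlePoint_add_pi]
  ring_nf

lemma groverOp_pow_circlePoint (θ : ℝ) (k : ℕ) :
    (groverOp (circlePoint e w θ) e ^ k) (circlePoint e w θ) =
      circlePoint e w ((2 * k + 1) * θ) := by
  induction k with
  | zero => simp
  | succ k ih =>
    rw [pow_succ', mul_apply_eq_comp, ih, groverOp_circlePoint he hw hew]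
    push_cast
    ring_nf

lemma norm_circlePoint_sub_le {θ φ : ℝ} (hφ : |φ - π / 2| ≤ θ) (hθ : θ ≤ π / 2) :
    ‖circlePoint e w φ - e‖ ≤ 2 * sin θ := by
  have hθ0 : 0 ≤ θ := (abs_nonneg _).trans hφ
  have hcos := cos_le_sin_of_abs_sub_pi_div_two_le hφ (by linarith)
  have hcos0 : 0 ≤ cos θ := cos_nonneg_of_neg_pi_div_two_le_of_le (by linarith) hθ
  have hsq : ‖circlePoint e w φ - e‖ ^ 2 ≤ (2 * sin θ) ^ 2 := by
    have h := norm_circlePoint_sub_sq he hw hew φ (π / 2)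
    rw [circlePoint_pi_div_two, cos_pi_div_two_sub] at h
    rw [h]
    nlinarith [sin_sq_add_cos_sq θ, cos_le_one θ]
  exact (pow_le_pow_iff_left₀ (norm_nonneg _)
    (mul_nonneg zero_le_two (sin_nonneg_of_nonneg_of_le_pi hθ0 (by linarith))) two_ne_zero).1 hsq

lemma cos_sq_le_norm_inner_circlePoint_sq {θ φ : ℝ} (hφ : |φ - π / 2| ≤ θ) (hθ : θ ≤ π / 2) :
    cos θ ^ 2 ≤ ‖⟪e, circlePoint e w φ⟫_ℂ‖ ^ 2 := by
  have hθ0 : 0 ≤ θ := (abs_nonneg _).trans hφ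
  have hcos0 : 0 ≤ cos θ := cos_nonneg_of_neg_pi_div_two_le_of_le (by linarith) hθ
  have h := inner_circlePoint he hw hew (π / 2) φ
  rw [circlePoint_pi_div_two, cos_sub_pi_div_two] at h
  rw [h, Complex.norm_real, Real.norm_eq_abs, sq_abs]
  exact pow_le_pow_left₀ hcos0 (cos_le_sin_of_abs_sub_pi_div_two_le hφ (by linarith)) 2

end

lemma uniformState_apply (N : ℕ) (x : Fin N) : uniformState N x = ((1 / √N : ℝ) : ℂ) := by
  simp [uniformState]

lemma norm_uniformState {N : ℕ} (hN : N ≠ 0) : ‖uniformState N‖ = 1 := by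
  rw [EuclideanSpace.norm_eq]
  simp only [uniformState_apply, Complex.norm_real, Real.norm_eq_abs, sq_abs, Finset.sum_const,
    Finset.card_univ, Fintype.card_fin, nsmul_eq_mul, div_pow, one_pow,
    sq_sqrt (Nat.cast_nonneg N)]
  rw [mul_one_div_cancel (Nat.cast_ne_zero.2 hN), sqrt_one]

lemma inner_single_uniformState (N : ℕ) (m : Fin N) :
    ⟪EuclideanSpace.single m (1 : ℂ), uniformState N⟫_ℂ = ((1 / √N : ℝ) : ℂ) := by
  rw [EuclideanSpace.inner_single_left, uniformState_apply, map_one, one_mul]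

/-- Grover's algorithm succeeds: there is a number of iterations
`R ≤ (π/4)√N` such that `‖G^R|s⟩ − |m⟩‖ ≤ 2/√N`; in particular
`|⟨m|G^R|s⟩|² ≥ 1 − 2/N`, so measuring after `R` iterations yields the marked
element with probability tending to `1` as `N → ∞`. -/
theorem grover_succeeds (N : ℕ) (hN : 2 ≤ N) (m : Fin N)
    (G : EuclideanSpace ℂ (Fin N) →L[ℂ] EuclideanSpace ℂ (Fin N))
    (hG : G = -((1 - (2 : ℂ) • proj (uniformState N)) *
      (1 - (2 : ℂ) • proj (EuclideanSpace.single m 1)))) :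
    ∃ R : ℕ, (R : ℝ) ≤ (π / 4) * Real.sqrt N ∧
      ‖(G ^ R) (uniformState N) - EuclideanSpace.single m (1 : ℂ)‖ ≤ 2 / Real.sqrt N ∧
      1 - 2 / (N : ℝ) ≤
        ‖⟪EuclideanSpace.single m (1 : ℂ), (G ^ R) (uniformState N)⟫_ℂ‖ ^ 2 := by
  have hsqrtN : 1 < √N := lt_sqrt_of_sq_lt (by rw [one_pow]; exact_mod_cast hN)
  have hinv_pos : 0 < 1 / √N := one_div_pos.2 (zero_lt_one.trans hsqrtN)
  have hinv_lt : 1 / √N < 1 := (div_lt_one (zero_lt_one.trans hsqrtN)).2 hsqrtN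
  set θ := arcsin (1 / √N)
  have hsin : sin θ = 1 / √N := sin_arcsin (by linarith) hinv_lt.le
  have hθ0 : 0 < θ := arcsin_pos.2 hinv_pos
  have hθ : θ < π / 2 := arcsin_lt_pi_div_two.2 hinv_lt
  set e := EuclideanSpace.single m (1 : ℂ)
  have he : ‖e‖ = 1 := by simp [e]
  obtain ⟨w, hw, hew, hs⟩ := exists_circlePoint_eq he (norm_uniformState (by omega))
    (by rw [inner_single_uniformState, hsin]) (cos_pos_of_mem_Ioo ⟨by linarith, hθ⟩).ne'
  obtain ⟨R, hR, hφ⟩ := exists_nat_abs_odd_mul_sub_pi_div_two_le hθ0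
  have hGR : (G ^ R) (uniformState N) = circlePoint e w ((2 * R + 1) * θ) := by
    rw [hG, hs]
    exact groverOp_pow_circlePoint he hw hew θ R
  refine ⟨R, ?_, ?_, ?_⟩
  · calc (R : ℝ) ≤ π / (4 * θ) := hR
      _ ≤ π / (4 * (1 / √N)) := by
        gcongr
        exact hsin ▸ sin_le hθ0.le
      _ = π / 4 * √N := by field_simp
  · rw [hGR, ← mul_one_div 2, ← hsin]
    exact norm_circlePoint_sub_le he hw hew hφ hθ.le
  · rw [hGR]
    refine le_trans ?_ (cos_sq_le_norm_inner_circlePoint_sq he hw hew hφ hθ.le)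
    rw [cos_sq', hsin, div_pow, one_pow, sq_sqrt (Nat.cast_nonneg N)]
    gcongr
    norm_num
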